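/- arXiv:math/0411264 — 4 statements merged into one kernel-verified Lean document; each statement's English description precedes it below -/
import Mathlib

section
/- On ℂ³ with coordinates (z₁, z₂, z₃), let f(z) = Re(z₂z₃/z₁) and let ∇f be its gradient with respect to the standard flat Kähler metric (defined where z₁ ≠ 0). Then the function φ₁(z) = |z₂|² − |z₃|² is invariant along the flow of ∇f, i.e., ∇f(φ₁) = 0. -/
/-! The differential of `φ₁ = |z₂|² − |z₃|²` at `z` is `v ↦ 2 Re (z̄₂ v₂) − 2 Re (z̄₃ v₃)`, and for the
gradient field both products equal `z̄₁ z̄₂ z̄₃ / z̄₁²`. -/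

open ComplexConjugate

theorem hasFDerivAt_normSq_apply {ι : Type*} [Fintype ι] (z : ι → ℂ) (i : ι) :
    HasFDerivAt (fun w : ι → ℂ => Complex.normSq (w i))
      ((2 • innerSL ℝ (z i)).comp (ContinuousLinearMap.proj i)) z := by
  have h := (ContinuousLinearMap.proj (R := ℝ) (φ := fun _ : ι => ℂ) i).hasFDerivAt.norm_sq (x := z)
  simp only [ContinuousLinearMap.proj_apply, Complex.sq_norm] at h
  exact h

theorem fderiv_normSq_sub_normSq_apply {ι : Type*} [Fintype ι] (z v : ι → ℂ) (i j : ι) :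
    fderiv ℝ (fun w : ι → ℂ => Complex.normSq (w i) - Complex.normSq (w j)) z v
      = 2 * (conj (z i) * v i).re - 2 * (conj (z j) * v j).re := by
  rw [HasFDerivAt.fderiv (f := fun w : ι → ℂ => Complex.normSq (w i) - Complex.normSq (w j))
    ((hasFDerivAt_normSq_apply z i).sub (hasFDerivAt_normSq_apply z j))]
  simp only [sub_apply, ContinuousLinearMap.comp_apply,
    smul_apply, ContinuousLinearMap.proj_apply, innerSL_apply_apply,
    Complex.inner, nsmul_eq_mul, Nat.cast_ofNat, mul_comm (v _)]

theorem fderiv_normSq_sub_normSq_apply_eq_zero {ι : Type*} [Fintype ι] {z v : ι → ℂ} {i j : ι}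
    (h : conj (z i) * v i = conj (z j) * v j) :
    fderiv ℝ (fun w : ι → ℂ => Complex.normSq (w i) - Complex.normSq (w j)) z v = 0 := by
  rw [fderiv_normSq_sub_normSq_apply, h, sub_self]

theorem stmt_4_general (z : Fin 3 → ℂ) :
    fderiv ℝ (fun w : Fin 3 → ℂ => Complex.normSq (w 1) - Complex.normSq (w 2)) z
      ![-((starRingEnd ℂ) (z 1) * (starRingEnd ℂ) (z 2)) / ((starRingEnd ℂ) (z 0)) ^ 2,
        ((starRingEnd ℂ) (z 0) * (starRingEnd ℂ) (z 2)) / ((starRingEnd ℂ) (z 0)) ^ 2,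
        ((starRingEnd ℂ) (z 0) * (starRingEnd ℂ) (z 1)) / ((starRingEnd ℂ) (z 0)) ^ 2] = 0 := by
  apply fderiv_normSq_sub_normSq_apply_eq_zero
  simp only [Matrix.cons_val_one, Matrix.cons_val_two, Matrix.cons_val_zero, Matrix.head_cons,
    Matrix.tail_cons]
  ring

/-- On ℂ³ with `f(z) = Re(z₂z₃/z₁)`, the gradient vector field of `f`
with respect to the standard flat Kähler metric (defined where `z₁ ≠ 0`), whose
complex components are `(−z̄₂z̄₃, z̄₁z̄₃, z̄₁z̄₂)/z̄₁²`, annihilates the function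
`φ₁(z) = |z₂|² − |z₃|²`, i.e. `∇f(φ₁) = 0`. -/
theorem stmt_4 (z : Fin 3 → ℂ) (hz : z 0 ≠ 0) :
    fderiv ℝ (fun w : Fin 3 → ℂ => Complex.normSq (w 1) - Complex.normSq (w 2)) z
      ![-((starRingEnd ℂ) (z 1) * (starRingEnd ℂ) (z 2)) / ((starRingEnd ℂ) (z 0)) ^ 2,
        ((starRingEnd ℂ) (z 0) * (starRingEnd ℂ) (z 2)) / ((starRingEnd ℂ) (z 0)) ^ 2,
        ((starRingEnd ℂ) (z 0) * (starRingEnd ℂ) (z 1)) / ((starRingEnd ℂ) (z 0)) ^ 2] = 0 :=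
  stmt_4_general z
end

section
/- On ℂ^{m+n} with m, n > 0, let f(z) = Re( (∏_{i=1}^m z_i)/(∏_{i=m+1}^{m+n} z_i) ). Then no non-constant solution curve of the gradient direction field ∇f (standard flat metric) approaches the origin. -/
/-- The meromorphic function `s(z) = (∏_{i<m} z_i)/(∏_{m ≤ i} z_i)` on `ℂ^{m+n}`. -/
noncomputable def sFun (m n : ℕ) (z : Fin (m + n) → ℂ) : ℂ :=
  (∏ i : Fin (m + n), if (i : ℕ) < m then z i else 1) /
    (∏ i : Fin (m + n), if (i : ℕ) < m then 1 else z i)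

/-- The gradient vector field `∇f` of `f = Re s` for the standard flat metric,
`∇f = Re(s̄(∑_{i<m} (z_i/|z_i|²)∂_i − ∑_{m≤i} (z_i/|z_i|²)∂_i))`,
given by its complex components. -/
noncomputable def gradDir (m n : ℕ) (z : Fin (m + n) → ℂ) : Fin (m + n) → ℂ := fun i =>
  (if (i : ℕ) < m then 1 else -1) * (starRingEnd ℂ) (sFun m n z) * z i /
    (Complex.normSq (z i) : ℂ)

/-!
Along a solution curve every `|z_i|²` has derivative `±2 Re s`, with sign `+` for `i < m` and
`-` for `m ≤ i`. Hence `|z_i|² + |z_j|²` is a first integral for `i < m ≤ j`. If the curve tends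
to the origin, these first integrals tend to `0`, so they vanish identically, and since
`m, n > 0` every coordinate occurs in one of them.
-/

open Complex ComplexConjugate Filter Topology

theorem sFun_eq_zero_of_apply_eq_zero {m n : ℕ} {z : Fin (m + n) → ℂ} {i : Fin (m + n)}
    (h : z i = 0) : sFun m n z = 0 := by
  simp only [sFun, div_eq_zero_iff, Finset.prod_eq_zero_iff]
  by_cases hi : (i : ℕ) < m
  · exact .inl ⟨i, Finset.mem_univ i, by simp [hi, h]⟩
  · exact .inr ⟨i, Finset.mem_univ i, by simp [hi, h]⟩

theorem gradDir_mul_conj (m n : ℕ) (z : Fin (m + n) → ℂ) (i : Fin (m + n)) :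
    gradDir m n z i * conj (z i) = (if (i : ℕ) < m then 1 else -1) * conj (sFun m n z) := by
  by_cases h : z i = 0
  -- at `z i = 0` the division by `|z i|² = 0` yields `0`, and `s(z) = 0` as well
  · simp [gradDir, h, sFun_eq_zero_of_apply_eq_zero h]
  · have hconj : conj (z i) ≠ 0 := (map_ne_zero _).mpr h
    rw [gradDir, normSq_eq_conj_mul_self]
    field_simp

theorem HasDerivAt.normSq {γ : ℝ → ℂ} {v : ℂ} {t : ℝ} (h : HasDerivAt γ v t) :
    HasDerivAt (fun s => normSq (γ s)) (2 * (v * conj (γ t)).re) t := by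
  simpa only [← normSq_eq_norm_sq, Complex.inner] using h.norm_sq

section Flow

variable {m n : ℕ} {φ : ℝ → Fin (m + n) → ℂ}

theorem hasDerivAt_normSq_apply (hφ : ∀ t, HasDerivAt φ (gradDir m n (φ t)) t)
    (i : Fin (m + n)) (t : ℝ) :
    HasDerivAt (fun s => normSq (φ s i))
      (2 * (if (i : ℕ) < m then 1 else -1) * (sFun m n (φ t)).re) t := by
  convert (hasDerivAt_pi.1 (hφ t) i).normSq using 1
  rw [gradDir_mul_conj]
  by_cases hi : (i : ℕ) < m <;> simp [hi]

theorem normSq_add_normSq_apply_eq (hφ : ∀ t, HasDerivAt φ (gradDir m n (φ t)) t)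
    {i j : Fin (m + n)} (hi : (i : ℕ) < m) (hj : ¬ (j : ℕ) < m) (t t' : ℝ) :
    normSq (φ t i) + normSq (φ t j) = normSq (φ t' i) + normSq (φ t' j) := by
  have hderiv : ∀ s, HasDerivAt (fun s => normSq (φ s i) + normSq (φ s j)) 0 s := fun s =>
    ((hasDerivAt_normSq_apply hφ i s).add (hasDerivAt_normSq_apply hφ j s)).congr_deriv
      (by simp [hi, hj])
  exact is_const_of_deriv_eq_zero (fun s => (hderiv s).differentiableAt)
    (fun s => (hderiv s).deriv) t t'

theorem apply_eq_zero_of_tendsto (hφ : ∀ t, HasDerivAt φ (gradDir m n (φ t)) t)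
    {l : Filter ℝ} [l.NeBot] (hφl : Tendsto φ l (𝓝 0))
    {i j : Fin (m + n)} (hi : (i : ℕ) < m) (hj : ¬ (j : ℕ) < m) (t : ℝ) :
    φ t i = 0 ∧ φ t j = 0 := by
  have hlim : Tendsto (fun s => normSq (φ s i) + normSq (φ s j)) l (𝓝 0) := by
    have hcont : Continuous fun z : Fin (m + n) → ℂ => normSq (z i) + normSq (z j) := by fun_prop
    simpa [Function.comp_def] using (hcont.tendsto 0).comp hφl
  have hsum : normSq (φ t i) + normSq (φ t j) = 0 := by
    simp_rw [normSq_add_normSq_apply_eq hφ hi hj _ t] at hlim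
    exact tendsto_const_nhds_iff.mp hlim
  rw [← normSq_eq_zero, ← normSq_eq_zero]
  constructor <;> linarith [normSq_nonneg (φ t i), normSq_nonneg (φ t j)]

end Flow

/-- for `m, n > 0`, no non-constant solution curve of the gradient
direction field `∇f`, `f(z) = Re((∏_{i<m} z_i)/(∏_{m≤i} z_i))`, approaches the origin:
any solution curve tending to `0` is constant. -/
theorem stmt_6 (m n : ℕ) (hm : 0 < m) (hn : 0 < n)
    (φ : ℝ → Fin (m + n) → ℂ)
    (hφ : ∀ t : ℝ, HasDerivAt φ (gradDir m n (φ t)) t)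
    (happ : Filter.Tendsto φ Filter.atTop (nhds 0) ∨
      Filter.Tendsto φ Filter.atBot (nhds 0)) :
    ∀ t t' : ℝ, φ t = φ t' := by
  obtain ⟨l, hl, hφl⟩ : ∃ l : Filter ℝ, l.NeBot ∧ Tendsto φ l (𝓝 0) :=
    happ.elim (fun h => ⟨atTop, inferInstance, h⟩) (fun h => ⟨atBot, inferInstance, h⟩)
  suffices hzero : ∀ t, φ t = 0 by intro t t'; rw [hzero t, hzero t']
  intro t
  funext k
  by_cases hk : (k : ℕ) < m
  · exact (apply_eq_zero_of_tendsto hφ hφl hk (j := ⟨m, by omega⟩) (by simp) t).1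
  · exact (apply_eq_zero_of_tendsto hφ hφl (i := ⟨0, by omega⟩) (by simpa) hk t).2
end

section
/- Consider the singular ODE initial value problem dθᵢ/dr = −(λᵢ/r)θᵢ + hᵢ(r, θ) for i = 1,…,m with θ(0) = 0, where each λᵢ ≥ 0 and h is Lipschitz in θ with constant M near the origin. Then there exists a unique continuous solution on a small interval [0, r₀]. -/
/-!
Multiplying the `i`-th equation by `r ^ λᵢ` turns it into `(r ^ λᵢ θᵢ)' = r ^ λᵢ hᵢ(r, θ)`, so
continuous solutions with `θ 0 = 0` are exactly the fixed points of
`θᵢ(r) ↦ r ^ (-λᵢ) ∫₀ʳ t ^ λᵢ hᵢ(t, θ t) dt`. As `r ^ (-λ) ∫₀ʳ t ^ λ dt ≤ r` for `λ ≥ 0`, this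
map is Lipschitz with constant `M r₀` on `C([0, r₀], ℝᵐ)`, hence a contraction once `M r₀ < 1`,
and the Banach fixed point theorem gives existence and uniqueness.
-/

open Set Filter Topology intervalIntegral Function

/-- `θ` is a continuous solution on `[0, r₀]` of the singular ODE
`dθᵢ/dr = −(λᵢ/r)θᵢ + hᵢ(r, θ)` with `θ(0) = 0`. -/
def IsSolODE (m : ℕ) (lam : Fin m → ℝ) (h : ℝ → (Fin m → ℝ) → Fin m → ℝ)
    (r₀ : ℝ) (θ : ℝ → Fin m → ℝ) : Prop :=
  ContinuousOn θ (Set.Icc 0 r₀) ∧ θ 0 = 0 ∧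
    ∀ r ∈ Set.Ioc (0 : ℝ) r₀,
      HasDerivWithinAt θ (fun i => -(lam i / r) * θ r i + h r (θ r) i) (Set.Ioc 0 r₀) r

noncomputable def singularIntegral (lam : ℝ) (g : ℝ → ℝ) (r : ℝ) : ℝ :=
  r ^ (-lam) * ∫ t in (0 : ℝ)..r, t ^ lam * g t

section singularIntegral

variable {lam : ℝ} {g : ℝ → ℝ}

@[simp]
lemma singularIntegral_zero_right : singularIntegral lam g 0 = 0 := by
  simp [singularIntegral]

lemma abs_singularIntegral_le (hl : 0 ≤ lam) {C r : ℝ} (hr : 0 ≤ r)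
    (hC : ∀ t ∈ Icc 0 r, |g t| ≤ C) :
    |singularIntegral lam g r| ≤ C * r := by
  rcases hr.eq_or_lt with rfl | hr
  · simp
  have hpow : 0 < r ^ lam := Real.rpow_pos_of_pos hr lam
  have hint : ‖∫ t in (0 : ℝ)..r, t ^ lam * g t‖ ≤ r ^ lam * C * |r - 0| := by
    refine norm_integral_le_of_norm_le_const fun t ht => ?_
    rw [uIoc_of_le hr.le] at ht
    rw [Real.norm_eq_abs, abs_mul, abs_of_nonneg (Real.rpow_nonneg ht.1.le _)]
    exact mul_le_mul (Real.rpow_le_rpow ht.1.le ht.2 hl) (hC t (Ioc_subset_Icc_self ht))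
      (abs_nonneg _) hpow.le
  rw [Real.norm_eq_abs, sub_zero, abs_of_pos hr] at hint
  rw [singularIntegral, abs_mul, abs_of_pos (Real.rpow_pos_of_pos hr _), Real.rpow_neg hr.le]
  calc (r ^ lam)⁻¹ * |∫ t in (0 : ℝ)..r, t ^ lam * g t|
      ≤ (r ^ lam)⁻¹ * (r ^ lam * C * r) := by gcongr
    _ = C * r := by field_simp

lemma continuous_rpow_const_mul (hl : 0 ≤ lam) (hg : Continuous g) :
    Continuous fun t : ℝ => t ^ lam * g t :=
  (Real.continuous_rpow_const hl).mul hg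

lemma singularIntegral_sub {g₁ g₂ : ℝ → ℝ} (hl : 0 ≤ lam) (hg₁ : Continuous g₁)
    (hg₂ : Continuous g₂) (r : ℝ) :
    singularIntegral lam g₁ r - singularIntegral lam g₂ r =
      singularIntegral lam (fun t => g₁ t - g₂ t) r := by
  rw [singularIntegral, singularIntegral, singularIntegral, ← mul_sub,
    ← integral_sub ((continuous_rpow_const_mul hl hg₁).intervalIntegrable _ _)
      ((continuous_rpow_const_mul hl hg₂).intervalIntegrable _ _)]
  simp only [mul_sub]

lemma continuousOn_singularIntegral (hl : 0 ≤ lam) (hg : Continuous g) :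
    ContinuousOn (singularIntegral lam g) (Ici 0) := by
  intro r hr
  rcases (mem_Ici.1 hr).eq_or_lt with rfl | hr
  · obtain ⟨C, hC⟩ := isCompact_Icc.exists_bound_of_continuousOn
      (s := Icc (0 : ℝ) 1) hg.continuousOn
    have hsmall : ∀ᶠ s in 𝓝[Ici 0] (0 : ℝ), ‖singularIntegral lam g s‖ ≤ C * s := by
      filter_upwards [self_mem_nhdsWithin, nhdsWithin_le_nhds (Iic_mem_nhds one_pos)]
        with s hs0 hs1
      exact abs_singularIntegral_le hl hs0 fun t ht => hC t ⟨ht.1, ht.2.trans hs1⟩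
    have hlim : Tendsto (fun s : ℝ => C * s) (𝓝[Ici 0] 0) (𝓝 0) := by
      simpa using ((continuous_const_mul C).tendsto 0).mono_left nhdsWithin_le_nhds
    simpa [ContinuousWithinAt] using squeeze_zero_norm' hsmall hlim
  · exact ((Real.continuousAt_rpow_const r _ (Or.inl hr.ne')).mul
      (continuous_primitive (fun a b => (continuous_rpow_const_mul hl hg).intervalIntegrable a b)
        0).continuousAt).continuousWithinAt

lemma hasDerivAt_singularIntegral (hl : 0 ≤ lam) (hg : Continuous g) {r : ℝ} (hr : 0 < r) :
    HasDerivAt (singularIntegral lam g) (-(lam / r) * singularIntegral lam g r + g r) r := by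
  have hu := continuous_rpow_const_mul hl hg
  have hprim : HasDerivAt (fun s => ∫ t in (0 : ℝ)..s, t ^ lam * g t) (r ^ lam * g r) r :=
    integral_hasDerivAt_right (hu.intervalIntegrable _ _)
      (hu.stronglyMeasurableAtFilter _ _) hu.continuousAt
  have hpow : HasDerivAt (fun s : ℝ => s ^ (-lam)) (-lam * r ^ (-lam - 1)) r :=
    Real.hasDerivAt_rpow_const (Or.inl hr.ne')
  refine (hpow.mul hprim).congr_deriv ?_
  have hr' : r ^ (-lam - 1) = r ^ (-lam) / r := by
    rw [Real.rpow_sub hr, Real.rpow_one]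
  rw [singularIntegral, hr', Real.rpow_neg hr.le]
  field_simp

-- `(r ^ λ * y)' = r ^ λ * g`, so `r ^ λ * y` is the primitive of `t ^ λ * g` vanishing at `0`.
lemma eqOn_singularIntegral_of_hasDerivWithinAt (hl : 0 ≤ lam) (hg : Continuous g)
    {y : ℝ → ℝ} {r₀ : ℝ}
    (hy : ContinuousOn y (Icc 0 r₀)) (hy0 : y 0 = 0)
    (hy' : ∀ r ∈ Ioc 0 r₀, HasDerivWithinAt y (-(lam / r) * y r + g r) (Ioc 0 r₀) r) :
    EqOn y (singularIntegral lam g) (Icc 0 r₀) := by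
  intro r hr
  rcases hr.1.eq_or_lt with rfl | hr0
  · simp [hy0]
  have hftc : ∫ t in (0 : ℝ)..r, t ^ lam * g t = r ^ lam * y r - 0 ^ lam * y 0 := by
    refine integral_eq_sub_of_hasDerivAt_of_le hr0.le
      (((Real.continuous_rpow_const hl).continuousOn).mul
        (hy.mono (Icc_subset_Icc_right hr.2))) (fun x hx => ?_)
      ((continuous_rpow_const_mul hl hg).intervalIntegrable _ _)
    have hyx : HasDerivAt y (-(lam / x) * y x + g x) x :=
      (hy' x ⟨hx.1, hx.2.le.trans hr.2⟩).hasDerivAt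
        (Ioc_mem_nhds hx.1 (hx.2.trans_le hr.2))
    refine ((Real.hasDerivAt_rpow_const (Or.inl hx.1.ne')).mul hyx).congr_deriv ?_
    rw [Real.rpow_sub hx.1, Real.rpow_one]
    field_simp
    ring
  rw [singularIntegral, hftc, hy0, mul_zero, sub_zero, ← mul_assoc, Real.rpow_neg hr0.le,
    inv_mul_cancel₀ (Real.rpow_pos_of_pos hr0 _).ne', one_mul]

end singularIntegral

section Picard

variable {ι : Type*} {lam : ι → ℝ} {h : ℝ → (ι → ℝ) → ι → ℝ}

noncomputable def singularPicard (lam : ι → ℝ) (h : ℝ → (ι → ℝ) → ι → ℝ)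
    (θ : ℝ → ι → ℝ) (r : ℝ) : ι → ℝ :=
  fun i => singularIntegral (lam i) (fun t => h t (θ t) i) r

lemma continuous_apply_along (hcont : Continuous fun p : ℝ × (ι → ℝ) => h p.1 p.2)
    {θ : ℝ → ι → ℝ} (hθ : Continuous θ) (i : ι) : Continuous fun t => h t (θ t) i :=
  (continuous_apply i).comp (hcont.comp (continuous_id.prodMk hθ))

lemma continuousOn_singularPicard (hlam : ∀ i, 0 ≤ lam i)
    (hcont : Continuous fun p : ℝ × (ι → ℝ) => h p.1 p.2) {θ : ℝ → ι → ℝ} (hθ : Continuous θ) :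
    ContinuousOn (singularPicard lam h θ) (Ici 0) :=
  continuousOn_pi.2 fun i =>
    continuousOn_singularIntegral (hlam i) (continuous_apply_along hcont hθ i)

lemma dist_singularPicard_le [Fintype ι] (hlam : ∀ i, 0 ≤ lam i)
    (hcont : Continuous fun p : ℝ × (ι → ℝ) => h p.1 p.2) {M : NNReal}
    (hlip : ∀ r, LipschitzWith M (h r)) {θ₁ θ₂ : ℝ → ι → ℝ} (hθ₁ : Continuous θ₁)
    (hθ₂ : Continuous θ₂) {C r : ℝ} (hr : 0 ≤ r) (hC : ∀ t ∈ Icc 0 r, dist (θ₁ t) (θ₂ t) ≤ C) :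
    dist (singularPicard lam h θ₁ r) (singularPicard lam h θ₂ r) ≤ M * C * r := by
  have hC0 : 0 ≤ C := dist_nonneg.trans (hC 0 ⟨le_rfl, hr⟩)
  refine (dist_pi_le_iff (by positivity)).2 fun i => ?_
  rw [Real.dist_eq, singularPicard, singularPicard, singularIntegral_sub (hlam i)
    (continuous_apply_along hcont hθ₁ i)
    (continuous_apply_along hcont hθ₂ i)]
  refine abs_singularIntegral_le (hlam i) hr fun t ht => ?_
  calc |h t (θ₁ t) i - h t (θ₂ t) i| ≤ dist (h t (θ₁ t)) (h t (θ₂ t)) :=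
        (Real.dist_eq _ _).symm.trans_le (dist_le_pi_dist _ _ i)
    _ ≤ M * dist (θ₁ t) (θ₂ t) := (hlip t).dist_le_mul _ _
    _ ≤ M * C := by gcongr; exact hC t ht

-- Elements of `C([0, r₀], ℝ^ι)` are extended to `ℝ` as constants outside `[0, r₀]`.
noncomputable def picardMap (hlam : ∀ i, 0 ≤ lam i)
    (hcont : Continuous fun p : ℝ × (ι → ℝ) => h p.1 p.2) {r₀ : ℝ} (hr₀ : 0 ≤ r₀)
    (f : C(Icc 0 r₀, ι → ℝ)) : C(Icc 0 r₀, ι → ℝ) :=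
  ⟨(Icc 0 r₀).domRestrict (singularPicard lam h (IccExtend hr₀ f)),
    continuousOn_iff_continuous_domRestrict.1 ((continuousOn_singularPicard hlam hcont
      (continuous_IccExtend_iff.2 f.continuous)).mono Icc_subset_Ici_self)⟩

lemma contractingWith_picardMap [Fintype ι] (hlam : ∀ i, 0 ≤ lam i)
    (hcont : Continuous fun p : ℝ × (ι → ℝ) => h p.1 p.2) {M : NNReal}
    (hlip : ∀ r, LipschitzWith M (h r)) {r₀ : ℝ} (hr₀ : 0 ≤ r₀) (hMr₀ : M * r₀ < 1) :
    ContractingWith (M * r₀.toNNReal) (picardMap hlam hcont hr₀) := by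
  have hK : ((M * r₀.toNNReal : NNReal) : ℝ) = M * r₀ := by
    rw [NNReal.coe_mul, Real.coe_toNNReal _ hr₀]
  refine ⟨by rwa [← NNReal.coe_lt_coe, hK], LipschitzWith.of_dist_le_mul fun f g => ?_⟩
  rw [hK]
  refine (ContinuousMap.dist_le (by positivity)).2 fun x => ?_
  calc dist (picardMap hlam hcont hr₀ f x) (picardMap hlam hcont hr₀ g x)
      ≤ M * dist f g * x :=
        dist_singularPicard_le hlam hcont hlip (continuous_IccExtend_iff.2 f.continuous)
          (continuous_IccExtend_iff.2 g.continuous) x.2.1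
          fun t _ => ContinuousMap.dist_apply_le_dist _
    _ ≤ M * dist f g * r₀ := by gcongr; exact x.2.2
    _ = M * r₀ * dist f g := by ring

end Picard

section IsSolODE

variable {m : ℕ} {lam : Fin m → ℝ} {h : ℝ → (Fin m → ℝ) → Fin m → ℝ} {r₀ : ℝ}

lemma IsSolODE.congr {θ θ' : ℝ → Fin m → ℝ} (hr₀ : 0 ≤ r₀) (hθ : IsSolODE m lam h r₀ θ)
    (heq : EqOn θ θ' (Icc 0 r₀)) : IsSolODE m lam h r₀ θ' := by
  obtain ⟨hc, h0, hd⟩ := hθ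
  refine ⟨hc.congr heq.symm, (heq ⟨le_rfl, hr₀⟩).symm.trans h0, fun r hr => ?_⟩
  rw [← heq (Ioc_subset_Icc_self hr)]
  exact (hd r hr).congr (fun s hs => (heq (Ioc_subset_Icc_self hs)).symm)
    (heq (Ioc_subset_Icc_self hr)).symm

lemma isSolODE_iff_eqOn_singularPicard (hlam : ∀ i, 0 ≤ lam i)
    (hcont : Continuous fun p : ℝ × (Fin m → ℝ) => h p.1 p.2) (hr₀ : 0 ≤ r₀)
    {θ : ℝ → Fin m → ℝ} (hθ : Continuous θ) :
    IsSolODE m lam h r₀ θ ↔ EqOn θ (singularPicard lam h θ) (Icc 0 r₀) := by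
  have hg := continuous_apply_along hcont hθ
  constructor
  · rintro ⟨-, h0, hd⟩ r hr
    funext i
    exact eqOn_singularIntegral_of_hasDerivWithinAt (hlam i) (hg i)
      ((continuous_apply i).comp hθ).continuousOn (congr_fun h0 i)
      (fun s hs => hasDerivWithinAt_pi.1 (hd s hs) i) hr
  · intro heq
    refine ⟨hθ.continuousOn, (heq ⟨le_rfl, hr₀⟩).trans (funext fun _ => ?_), fun r hr => ?_⟩
    · exact singularIntegral_zero_right
    refine hasDerivWithinAt_pi.2 fun i => ?_
    have hval : θ r i = singularIntegral (lam i) (fun t => h t (θ t) i) r :=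
      congr_fun (heq (Ioc_subset_Icc_self hr)) i
    rw [hval]
    exact (hasDerivAt_singularIntegral (hlam i) (hg i) hr.1).hasDerivWithinAt.congr
      (fun s hs => congr_fun (heq (Ioc_subset_Icc_self hs)) i) hval

lemma isSolODE_IccExtend_of_isFixedPt (hlam : ∀ i, 0 ≤ lam i)
    (hcont : Continuous fun p : ℝ × (Fin m → ℝ) => h p.1 p.2) (hr₀ : 0 ≤ r₀)
    {f : C(Icc 0 r₀, Fin m → ℝ)} (hf : IsFixedPt (picardMap hlam hcont hr₀) f) :
    IsSolODE m lam h r₀ (IccExtend hr₀ f) :=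
  (isSolODE_iff_eqOn_singularPicard hlam hcont hr₀ (continuous_IccExtend_iff.2 f.continuous)).2
    fun r hr => (IccExtend_of_mem hr₀ f hr).trans (DFunLike.congr_fun hf ⟨r, hr⟩).symm

lemma IsSolODE.isFixedPt_picardMap (hlam : ∀ i, 0 ≤ lam i)
    (hcont : Continuous fun p : ℝ × (Fin m → ℝ) => h p.1 p.2) (hr₀ : 0 ≤ r₀)
    {θ : ℝ → Fin m → ℝ} (hθ : IsSolODE m lam h r₀ θ) :
    IsFixedPt (picardMap hlam hcont hr₀)
      ⟨(Icc 0 r₀).domRestrict θ, continuousOn_iff_continuous_domRestrict.1 hθ.1⟩ := by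
  set f : C(Icc 0 r₀, Fin m → ℝ) := ⟨_, continuousOn_iff_continuous_domRestrict.1 hθ.1⟩
  have hext : EqOn θ (IccExtend hr₀ f) (Icc 0 r₀) := fun r hr =>
    (IccExtend_of_mem hr₀ f hr).symm
  have hfix := (isSolODE_iff_eqOn_singularPicard hlam hcont hr₀
    (continuous_IccExtend_iff.2 f.continuous)).1 (hθ.congr hr₀ hext)
  ext1 x
  exact (hfix x.2).symm.trans (hext x.2).symm

end IsSolODE

/-- the singular initial value problem `dθᵢ/dr = −(λᵢ/r)θᵢ + hᵢ(r,θ)`,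
`θ(0) = 0`, with `λᵢ ≥ 0` and `h` continuous and uniformly Lipschitz in `θ`, has a
unique continuous solution on a small interval `[0, r₀]`. -/
theorem stmt_7 (m : ℕ) (lam : Fin m → ℝ) (hlam : ∀ i, 0 ≤ lam i)
    (R : ℝ) (hR : 0 < R) (M : NNReal)
    (h : ℝ → (Fin m → ℝ) → Fin m → ℝ)
    (hcont : Continuous fun p : ℝ × (Fin m → ℝ) => h p.1 p.2)
    (hlip : ∀ r : ℝ, LipschitzWith M (h r)) :
    ∃ r₀ : ℝ, 0 < r₀ ∧ r₀ ≤ R ∧ (∃ θ, IsSolODE m lam h r₀ θ) ∧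
      ∀ θ₁ θ₂, IsSolODE m lam h r₀ θ₁ → IsSolODE m lam h r₀ θ₂ →
        Set.EqOn θ₁ θ₂ (Set.Icc 0 r₀) := by
  obtain ⟨r₀, hr₀, hr₀R, hMr₀⟩ : ∃ r₀ : ℝ, 0 < r₀ ∧ r₀ ≤ R ∧ M * r₀ < 1 := by
    refine ⟨min R ((M : ℝ) + 1)⁻¹, lt_min hR (by positivity), min_le_left _ _, ?_⟩
    calc M * min R ((M : ℝ) + 1)⁻¹ ≤ M * ((M : ℝ) + 1)⁻¹ := by gcongr; exact min_le_right _ _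
      _ < 1 := by rw [mul_inv_lt_iff₀ (by positivity)]; linarith
  have hT := contractingWith_picardMap hlam hcont hlip hr₀.le hMr₀
  have : Nonempty C(Icc (0 : ℝ) r₀, Fin m → ℝ) := ⟨0⟩
  refine ⟨r₀, hr₀, hr₀R,
    ⟨_, isSolODE_IccExtend_of_isFixedPt hlam hcont hr₀.le hT.fixedPoint_isFixedPt⟩,
    fun θ₁ θ₂ h₁ h₂ r hr => ?_⟩
  have h₁₂ := hT.fixedPoint_unique' (h₁.isFixedPt_picardMap hlam hcont hr₀.le)
    (h₂.isFixedPt_picardMap hlam hcont hr₀.le)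
  exact DFunLike.congr_fun h₁₂ ⟨r, hr⟩
end

section
/- Let f(r) = c₁ + ∫₀ʳ (λ − c₂ ∫₀ˢ ρ((log t − 2 log a)/(λ−1)) (1/(2t)) dt) ds, where ρ is a smooth cutoff with ρ = 1 on [−∞,1], ρ = 0 on [2,∞), 0 ≤ ρ ≤ 1, and c₂ = (λ−1)/∫₀^∞ ρ((log t − 2 log a)/(λ−1))(1/(2t)) dt. Then f'(r) = λ for r ≤ a²e^{−2|λ−1|}, f'(r) = 1 for r ≥ a²e^{2|λ−1|}, f' is monotone in between, and if λ ≥ 1 then |r f''(r)| ≤ 1/2 for all r. -/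
open MeasureTheory Real Set

/-- properties of the interpolating profile
`f(r) = c₁ + ∫₀ʳ (λ − c₂ ∫₀ˢ ρ((log t − 2 log a)/(λ−1)) (1/(2t)) dt) ds`:
`f' = λ` for `r ≤ a²e^{−2|λ−1|}`, `f' = 1` for `r ≥ a²e^{2|λ−1|}`, `f'` is monotone
in between, and if `λ ≥ 1` then `|r f''(r)| ≤ 1/2` for all `r > 0`. -/
theorem stmt_9 (ρ : ℝ → ℝ) (hρsm : ContDiff ℝ (⊤ : ℕ∞) ρ)
    (hρ1 : ∀ x : ℝ, |x| ≤ 1 → ρ x = 1) (hρ0 : ∀ x : ℝ, 2 ≤ |x| → ρ x = 0)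
    (hρrange : ∀ x : ℝ, 0 ≤ ρ x ∧ ρ x ≤ 1)
    (a lam : ℝ) (ha : 0 < a) (hlam : 0 < lam) (hne : lam ≠ 1)
    (c₁ c₂ : ℝ)
    (hc₂ : c₂ = (lam - 1) /
      ∫ t in Set.Ioi (0 : ℝ), ρ ((Real.log t - 2 * Real.log a) / (lam - 1)) * (1 / (2 * t)))
    (f : ℝ → ℝ)
    (hf : ∀ r : ℝ, f r = c₁ + ∫ s in (0 : ℝ)..r,
      (lam - c₂ * ∫ t in (0 : ℝ)..s,
        ρ ((Real.log t - 2 * Real.log a) / (lam - 1)) * (1 / (2 * t)))) :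
    (∀ r ∈ Set.Ioc (0 : ℝ) (a ^ 2 * Real.exp (-(2 * |lam - 1|))), deriv f r = lam) ∧
    (∀ r : ℝ, a ^ 2 * Real.exp (2 * |lam - 1|) ≤ r → deriv f r = 1) ∧
    (MonotoneOn (deriv f)
        (Set.Icc (a ^ 2 * Real.exp (-(2 * |lam - 1|))) (a ^ 2 * Real.exp (2 * |lam - 1|))) ∨
      AntitoneOn (deriv f)
        (Set.Icc (a ^ 2 * Real.exp (-(2 * |lam - 1|))) (a ^ 2 * Real.exp (2 * |lam - 1|)))) ∧
    (1 ≤ lam → ∀ r : ℝ, 0 < r → |r * deriv (deriv f) r| ≤ 1 / 2) := by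
  have hL : lam - 1 ≠ 0 := sub_ne_zero.mpr hne
  have hM : 0 < |lam - 1| := abs_pos.mpr hL
  set M : ℝ := |lam - 1| with hMdef
  set A : ℝ := a ^ 2 * Real.exp (-(2 * M)) with hAdef
  set B : ℝ := a ^ 2 * Real.exp (2 * M) with hBdef
  have ha2 : (0 : ℝ) < a ^ 2 := by positivity
  have hA0 : 0 < A := by positivity
  have hB0 : 0 < B := by positivity
  set h : ℝ → ℝ := fun t => ρ ((Real.log t - 2 * Real.log a) / (lam - 1)) * (1 / (2 * t))
    with hhdef
  have hlog2 : Real.log (a ^ 2) = 2 * Real.log a := by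
    rw [Real.log_pow]; push_cast; ring
  have hlogA : Real.log A = 2 * Real.log a - 2 * M := by
    rw [hAdef, Real.log_mul (ne_of_gt ha2) (Real.exp_ne_zero _), hlog2, Real.log_exp]; ring
  have hlogB : Real.log B = 2 * Real.log a + 2 * M := by
    rw [hBdef, Real.log_mul (ne_of_gt ha2) (Real.exp_ne_zero _), hlog2, Real.log_exp]
  -- h vanishes near 0
  have habs2 : ∀ t : ℝ, 2 * M ≤ |Real.log t - 2 * Real.log a| →
      (2 : ℝ) ≤ |(Real.log t - 2 * Real.log a) / (lam - 1)| := by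
    intro t ht
    rw [abs_div, le_div_iff₀ hM]
    linarith
  have hzA : ∀ t : ℝ, |t| ≤ A → h t = 0 := by
    intro t ht
    rcases eq_or_ne t 0 with rfl | ht0
    · simp [hhdef]
    · have hlt : Real.log t ≤ Real.log A := by
        rw [← Real.log_abs]
        exact Real.log_le_log (abs_pos.mpr ht0) ht
      rw [hlogA] at hlt
      have : 2 * M ≤ |Real.log t - 2 * Real.log a| :=
        le_abs.mpr (Or.inr (by linarith))
      show ρ _ * _ = 0
      rw [hρ0 _ (habs2 t this), zero_mul]
  have hzB : ∀ t : ℝ, B ≤ |t| → h t = 0 := by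
    intro t ht
    have ht0 : t ≠ 0 := by
      intro h0; rw [h0, abs_zero] at ht; linarith
    have hlt : Real.log B ≤ Real.log t := by
      rw [← Real.log_abs t]
      exact Real.log_le_log hB0 ht
    rw [hlogB] at hlt
    have : 2 * M ≤ |Real.log t - 2 * Real.log a| :=
      le_abs.mpr (Or.inl (by linarith))
    show ρ _ * _ = 0
    rw [hρ0 _ (habs2 t this), zero_mul]
  -- continuity of h
  have hcont : Continuous h := by
    rw [continuous_iff_continuousAt]
    intro t
    rcases eq_or_ne t 0 with rfl | ht0
    · have hev : h =ᶠ[nhds (0 : ℝ)] fun _ => (0 : ℝ) := by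
        filter_upwards [Metric.ball_mem_nhds (0 : ℝ) hA0] with s hs
        exact hzA s (le_of_lt (by simpa [Real.norm_eq_abs] using mem_ball_zero_iff.mp hs))
      exact (continuousAt_congr hev).mpr continuousAt_const
    · apply ContinuousAt.mul
      · exact (hρsm.continuous.continuousAt).comp
          (((Real.continuousAt_log ht0).sub continuousAt_const).div_const _)
      · exact continuousAt_const.div ((continuous_const.mul continuous_id).continuousAt)
          (by simpa using ht0)
  have hsupp : HasCompactSupport h := by
    apply HasCompactSupport.intro (isCompact_Icc (a := -B) (b := B))
    intro t ht
    apply hzB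
    rw [Set.mem_Icc] at ht
    push_neg at ht
    rcases lt_or_ge t (-B) with h1 | h1
    · exact le_abs.mpr (Or.inr (by linarith))
    · exact le_abs.mpr (Or.inl (ht h1).le)
  have hInt : Integrable h := hcont.integrable_of_hasCompactSupport hsupp
  set F : ℝ → ℝ := fun s => ∫ t in (0 : ℝ)..s, h t with hFdef
  have hFder : ∀ r : ℝ, HasDerivAt F (h r) r := fun r =>
    intervalIntegral.integral_hasDerivAt_right (hcont.intervalIntegrable _ _)
      (hcont.stronglyMeasurableAtFilter _ _) hcont.continuousAt
  have hFc : Continuous F := by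
    rw [continuous_iff_continuousAt]; exact fun r => (hFder r).continuousAt
  set g : ℝ → ℝ := fun s => lam - c₂ * F s with hgdef
  have hgc : Continuous g := continuous_const.sub (continuous_const.mul hFc)
  have hfeq : f = fun u => c₁ + ∫ s in (0 : ℝ)..u, g s := funext hf
  have hfder : ∀ r : ℝ, HasDerivAt f (g r) r := by
    intro r
    rw [hfeq]
    exact (intervalIntegral.integral_hasDerivAt_right (hgc.intervalIntegrable _ _)
      (hgc.stronglyMeasurableAtFilter _ _) hgc.continuousAt).const_add c₁
  have hderiv : ∀ r : ℝ, deriv f r = g r := fun r => (hfder r).deriv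
  -- the total mass I
  set I : ℝ := ∫ t in Set.Ioi (0 : ℝ), h t with hIdef
  have hc₂' : c₂ = (lam - 1) / I := hc₂
  have hnonnegIoi : 0 ≤ᵐ[volume.restrict (Set.Ioi (0 : ℝ))] h := by
    filter_upwards [ae_restrict_mem measurableSet_Ioi] with t ht
    have ht0 : 0 < t := ht
    exact mul_nonneg (hρrange _).1 (by positivity)
  -- lower bound for I
  have hMI : M ≤ I := by
    set A' : ℝ := a ^ 2 * Real.exp (-M) with hA'def
    set B' : ℝ := a ^ 2 * Real.exp M with hB'def
    have hA'0 : 0 < A' := by positivity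
    have hA'B' : A' ≤ B' := by
      apply mul_le_mul_of_nonneg_left (Real.exp_le_exp.mpr (by linarith)) ha2.le
    have hlogA' : Real.log A' = 2 * Real.log a - M := by
      rw [hA'def, Real.log_mul (ne_of_gt ha2) (Real.exp_ne_zero _), hlog2, Real.log_exp]; ring
    have hlogB' : Real.log B' = 2 * Real.log a + M := by
      rw [hB'def, Real.log_mul (ne_of_gt ha2) (Real.exp_ne_zero _), hlog2, Real.log_exp]
    have hone : ∀ t ∈ Set.uIcc A' B', h t = 1 / (2 * t) := by
      intro t ht
      rw [Set.uIcc_of_le hA'B'] at ht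
      have ht0 : 0 < t := lt_of_lt_of_le hA'0 ht.1
      have h1 : Real.log A' ≤ Real.log t := Real.log_le_log hA'0 ht.1
      have h2 : Real.log t ≤ Real.log B' := Real.log_le_log ht0 ht.2
      rw [hlogA'] at h1; rw [hlogB'] at h2
      have habs1 : |(Real.log t - 2 * Real.log a) / (lam - 1)| ≤ 1 := by
        rw [abs_div, div_le_one hM]
        exact abs_le.mpr ⟨by linarith, by linarith⟩
      show ρ _ * _ = 1 / (2 * t)
      rw [hρ1 _ habs1, one_mul]
    have hIcc : ∫ t in A'..B', h t = M := by
      rw [intervalIntegral.integral_congr hone]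
      have : ∀ t : ℝ, 1 / (2 * t) = (1 / 2) * t⁻¹ := by
        intro t; rw [one_div, mul_inv, one_div]
      simp_rw [this]
      rw [intervalIntegral.integral_const_mul, integral_inv]
      · have hquot : B' / A' = Real.exp (2 * M) := by
          rw [hB'def, hA'def, mul_div_mul_left _ _ (ne_of_gt ha2), ← Real.exp_sub]
          congr 1; ring
        rw [hquot, Real.log_exp]; ring
      · rw [Set.uIcc_of_le hA'B']
        intro hc
        exact absurd hc.1 (not_le.mpr hA'0)
    have hsub : ∫ t in Set.Ioc A' B', h t ≤ I := by
      apply MeasureTheory.setIntegral_mono_set hInt.integrableOn hnonnegIoi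
      exact Filter.Eventually.of_forall (fun t ht => lt_of_lt_of_le hA'0 ht.1.le)
    rw [← intervalIntegral.integral_of_le hA'B', hIcc] at hsub
    exact hsub
  have hI0 : 0 < I := lt_of_lt_of_le hM hMI
  -- Part 1
  have part1 : ∀ r ∈ Set.Ioc (0 : ℝ) A, deriv f r = lam := by
    intro r hr
    rw [hderiv]
    have hF0 : F r = 0 := by
      have : ∀ t ∈ Set.uIcc (0 : ℝ) r, h t = (fun _ => (0 : ℝ)) t := by
        intro t ht
        rw [Set.uIcc_of_le hr.1.le] at ht
        exact hzA t (by rw [abs_of_nonneg ht.1]; exact le_trans ht.2 hr.2)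
      show (∫ t in (0 : ℝ)..r, h t) = 0
      rw [intervalIntegral.integral_congr this, intervalIntegral.integral_zero]
    show lam - c₂ * F r = lam
    rw [hF0]; ring
  -- Part 2
  have part2 : ∀ r : ℝ, B ≤ r → deriv f r = 1 := by
    intro r hr
    have hr0 : 0 < r := lt_of_lt_of_le hB0 hr
    have hFr : F r = I := by
      have h1 : F r = ∫ t in Set.Ioc 0 r, h t := intervalIntegral.integral_of_le hr0.le
      have h3 : ∫ t in Set.Ioi r, h t = 0 := by
        rw [MeasureTheory.setIntegral_congr_fun measurableSet_Ioi
          (fun t (ht : t ∈ Set.Ioi r) => hzB t (by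
            rw [abs_of_pos (lt_trans hr0 ht)]; exact le_trans hr ht.le))]
        simp
      have h2 : I = (∫ t in Set.Ioc 0 r, h t) + ∫ t in Set.Ioi r, h t := by
        rw [hIdef, ← MeasureTheory.setIntegral_union (Set.Ioc_disjoint_Ioi le_rfl)
          measurableSet_Ioi hInt.integrableOn hInt.integrableOn,
          Set.Ioc_union_Ioi_eq_Ioi hr0.le]
      rw [h3, add_zero] at h2
      rw [h1, ← h2]
    rw [hderiv]
    show lam - c₂ * F r = 1
    rw [hFr, hc₂', div_mul_cancel₀ _ (ne_of_gt hI0)]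
    ring
  -- monotonicity of F
  have hFmono : ∀ x ∈ Set.Icc A B, ∀ y ∈ Set.Icc A B, x ≤ y → F x ≤ F y := by
    intro x hx y hy hxy
    have key : F x + ∫ t in x..y, h t = F y :=
      intervalIntegral.integral_add_adjacent_intervals (hcont.intervalIntegrable 0 x)
        (hcont.intervalIntegrable x y)
    have pos : 0 ≤ ∫ t in x..y, h t := by
      apply intervalIntegral.integral_nonneg hxy
      intro t ht
      have ht0 : 0 < t := lt_of_lt_of_le hA0 (le_trans hx.1 ht.1)
      exact mul_nonneg (hρrange _).1 (by positivity)
    linarith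
  -- Part 3
  have part3 : MonotoneOn (deriv f) (Set.Icc A B) ∨ AntitoneOn (deriv f) (Set.Icc A B) := by
    rcases le_or_gt lam 1 with hcase | hcase
    · left
      intro x hx y hy hxy
      rw [hderiv, hderiv]
      have hc2 : c₂ ≤ 0 := by
        rw [hc₂']
        exact div_nonpos_of_nonpos_of_nonneg (by linarith) hI0.le
      have := hFmono x hx y hy hxy
      show lam - c₂ * F x ≤ lam - c₂ * F y
      nlinarith
    · right
      intro x hx y hy hxy
      rw [hderiv, hderiv]
      have hc2 : 0 ≤ c₂ := by
        rw [hc₂']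
        exact div_nonneg (by linarith) hI0.le
      have := hFmono x hx y hy hxy
      show lam - c₂ * F y ≤ lam - c₂ * F x
      nlinarith
  -- Part 4
  refine ⟨part1, part2, part3, ?_⟩
  intro h1l r hr
  have hlam1 : 1 < lam := lt_of_le_of_ne h1l (Ne.symm hne)
  have hMeq : M = lam - 1 := abs_of_pos (by linarith)
  have hc2a : 0 ≤ c₂ := by rw [hc₂']; exact div_nonneg (by linarith) hI0.le
  have hc2b : c₂ ≤ 1 := by
    rw [hc₂', div_le_one hI0]; linarith
  have hdf : deriv f = g := funext hderiv
  rw [hdf]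
  have hgder : HasDerivAt g (-(c₂ * h r)) r := ((hFder r).const_mul c₂).const_sub lam
  rw [hgder.deriv]
  have hp := hρrange ((Real.log r - 2 * Real.log a) / (lam - 1))
  have hval : h r = ρ ((Real.log r - 2 * Real.log a) / (lam - 1)) * (1 / (2 * r)) := rfl
  set p : ℝ := ρ ((Real.log r - 2 * Real.log a) / (lam - 1)) with hpdef
  have hrne : r ≠ 0 := ne_of_gt hr
  have hcalc : r * -(c₂ * h r) = -(c₂ * p * (1 / 2)) := by
    rw [hval]
    field_simp
  rw [hcalc, abs_neg, abs_of_nonneg (mul_nonneg (mul_nonneg hc2a hp.1) (by norm_num))]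
  nlinarith [hp.1, hp.2]
end
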